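/- Let X and Y be real Banach spaces and f : X → Y a locally Lipschitz map with a pseudo-Jacobian mapping Jf satisfying the strong chain rule condition on X. Fix y ∈ Y and x ∈ X. If Jf is regular at x and f(x) ≠ y, then λ_{F_y}(x) ≥ reg Jf(x) > 0. Consequently, if Jf is regular at x and λ_{F_y}(x) = 0, then f(x) = y. -/

import Mathlib

open Filter Topology Metric Set MeasureTheory

noncomputable section

variable {X Y : Type*} [NormedAddCommGroup X] [NormedSpace ℝ X]
  [NormedAddCommGroup Y] [NormedSpace ℝ Y]

/-- The upper right-hand Dini derivative of `φ` at `x` in the direction `v`. -/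
def diniPlus (φ : X → ℝ) (x v : X) : ℝ :=
  Filter.limsup (fun t : ℝ => (φ (x + t • v) - φ x) / t) (𝓝[>] (0 : ℝ))

/-- `J` is a pseudo-Jacobian of `f` at `x`. -/
def IsPseudoJacobianAt (f : X → Y) (x : X) (J : Set (X →L[ℝ] Y)) : Prop :=
  J.Nonempty ∧ ∀ (y' : StrongDual ℝ Y) (v : X),
    diniPlus (fun z => y' (f z)) x v ≤ sSup ((fun T : X →L[ℝ] Y => y' (T v)) '' J)

/-- The Clarke generalized directional derivative of `φ` at `x` in the direction `v`. -/
def clarkeDeriv (φ : X → ℝ) (x v : X) : ℝ :=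
  Filter.limsup (fun p : X × ℝ => (φ (p.1 + p.2 • v) - φ p.1) / p.2)
    ((𝓝 x) ×ˢ (𝓝[>] (0 : ℝ)))

/-- The Clarke subdifferential of `φ` at `x`. -/
def clarkeSubdiff (φ : X → ℝ) (x : X) : Set (StrongDual ℝ X) :=
  {x' | ∀ v : X, x' v ≤ clarkeDeriv φ x v}

/-- `λ_F(x)`, the minimal norm of elements of the Clarke subdifferential of `F` at `x`. -/
def lambdaF (F : X → ℝ) (x : X) : ℝ :=
  sInf ((fun w : StrongDual ℝ X => ‖w‖) '' clarkeSubdiff F x)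

/-- The Banach constant `C(T) = inf {‖T* y*‖ : ‖y*‖ = 1}`. -/
def banachC (T : X →L[ℝ] Y) : ℝ :=
  sInf ((fun y' : StrongDual ℝ Y => ‖y'.comp T‖) '' {y' | ‖y'‖ = 1})

/-- The dual Banach constant `C*(T) = inf {‖T u‖ : ‖u‖ = 1}`. -/
def banachCStar (T : X →L[ℝ] Y) : ℝ :=
  sInf ((fun u : X => ‖T u‖) '' {u : X | ‖u‖ = 1})

/-- `sur Jf(x) = sup_{r>0} inf {C(T) : T ∈ co Jf(B(x;r))}`. -/
def surJ (Jf : X → Set (X →L[ℝ] Y)) (x : X) : ℝ :=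
  sSup {c : ℝ | ∃ r > (0 : ℝ),
    c = sInf (banachC '' convexHull ℝ (⋃ z ∈ ball x r, Jf z))}

/-- `inj Jf(x) = sup_{r>0} inf {C*(T) : T ∈ co Jf(B(x;r))}`. -/
def injJ (Jf : X → Set (X →L[ℝ] Y)) (x : X) : ℝ :=
  sSup {c : ℝ | ∃ r > (0 : ℝ),
    c = sInf (banachCStar '' convexHull ℝ (⋃ z ∈ ball x r, Jf z))}

/-- `Δ F_y(x) = ∂‖·‖(f(x)-y) ∘ co̅(Jf(x))`. -/
def DeltaF (f : X → Y) (Jf : X → Set (X →L[ℝ] Y)) (y : Y) (x : X) :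
    Set (StrongDual ℝ X) :=
  {w | ∃ y' ∈ clarkeSubdiff (fun z : Y => ‖z‖) (f x - y),
      ∃ T ∈ closure (convexHull ℝ (Jf x)), w = ContinuousLinearMap.comp y' T}

/-- The chain rule condition for the pseudo-Jacobian mapping `Jf` of `f` on `U`. -/
def ChainRuleCond (f : X → Y) (Jf : X → Set (X →L[ℝ] Y)) (U : Set X) : Prop :=
  ∀ x ∈ U, ∀ y : Y, y ≠ f x →
    IsClosed (StrongDual.toWeakDual '' DeltaF f Jf y x) ∧
    Convex ℝ (DeltaF f Jf y x) ∧
    IsPseudoJacobianAt (fun z : X => ‖f z - y‖) x (DeltaF f Jf y x)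

/-- The strong chain rule condition: the chain rule condition, `f` locally Lipschitz,
and `Δ F_y(x)` contains the Clarke subdifferential of `F_y` at `x`. -/
def StrongChainRuleCond (f : X → Y) (Jf : X → Set (X →L[ℝ] Y)) (U : Set X) : Prop :=
  ChainRuleCond f Jf U ∧
  (∀ x ∈ U, ∃ K : NNReal, ∃ t ∈ 𝓝 x, LipschitzOnWith K f t) ∧
  ∀ x ∈ U, ∀ y : Y, y ≠ f x →
    clarkeSubdiff (fun z : X => ‖f z - y‖) x ⊆ DeltaF f Jf y x

/-- `Jf` is regular at `x₀`. -/
def RegularAt (Jf : X → Set (X →L[ℝ] Y)) (x₀ : X) : Prop :=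
  (∃ r > (0 : ℝ), ∀ T ∈ convexHull ℝ (⋃ z ∈ ball x₀ r, Jf z),
      ∃ e : X ≃L[ℝ] Y, (e : X →L[ℝ] Y) = T) ∧
  surJ Jf x₀ = injJ Jf x₀ ∧ 0 < surJ Jf x₀

/-- The regularity index `reg Jf(x₀)`. -/
def regJ (Jf : X → Set (X →L[ℝ] Y)) (x₀ : X) : ℝ := surJ Jf x₀

/-- `f` is open with linear rate around `x₀`. -/
def OpenWithLinearRateAt (f : X → Y) (x₀ : X) : Prop :=
  ∃ V ∈ 𝓝 x₀, ∃ α > (0 : ℝ), ∀ x ∈ V, ∀ r > (0 : ℝ), ball x r ⊆ V →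
    ball (f x) (α * r) ⊆ f '' ball x r

/-- `h` is a weight: continuous, nondecreasing, nonnegative on `[0,∞)`,
with `∫₀^∞ dρ/(1+h(ρ)) = ∞`. -/
def IsWeight (h : ℝ → ℝ) : Prop :=
  ContinuousOn h (Ici 0) ∧ MonotoneOn h (Ici 0) ∧ (∀ ρ ∈ Ici (0 : ℝ), 0 ≤ h ρ) ∧
  ∫⁻ ρ in Ioi (0 : ℝ), ENNReal.ofReal (1 / (1 + h ρ)) = ⊤

/-- The weighted Chang–Palais–Smale condition for `F` with respect to the weight `h`. -/
def ChangPS (F : X → ℝ) (h : ℝ → ℝ) : Prop :=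
  ∀ u : ℕ → X, (∃ M : ℝ, ∀ n, |F (u n)| ≤ M) →
    Tendsto (fun n => lambdaF F (u n) * (1 + h ‖u n‖)) atTop (𝓝 0) →
    ∃ φ : ℕ → ℕ, StrictMono φ ∧ ∃ z : X, Tendsto ((fun n => u n) ∘ φ) atTop (𝓝 z)

/-- The local Lipschitz constant of `g` at `y`. -/
def lipConstAt (g : Y → X) (y : Y) : ℝ :=
  sInf {c : ℝ | ∃ r > (0 : ℝ), c = sSup {q : ℝ | ∃ u ∈ ball y r, ∃ w ∈ ball y r,
    u ≠ w ∧ q = ‖g u - g w‖ / ‖u - w‖}}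

/-!
Every `w ∈ ∂F_y(x)` lies in `ΔF_y(x)`, so `w = y* ∘ T` with `‖y*‖ = 1` (as `f x ≠ y`) and `T` in
the closed convex hull of `Jf x`. Hence `‖w‖ ≥ C(T)`, and `C(T) ≥ reg Jf(x)` because the Banach
constant is `1`-Lipschitz in `T`. Since `λ` is an infimum, this needs `∂F_y(x) ≠ ∅`: the Clarke
derivative of a locally Lipschitz function is sublinear, so Hahn–Banach provides a subgradient.
-/

open scoped NNReal

theorem limsup_comp_le_of_tendsto {α : Type*} {l : Filter α} [l.NeBot] {m : α → α}
    (hm : Tendsto m l l) {u : α → ℝ} (hle : IsBoundedUnder (· ≤ ·) l u)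
    (hge : IsBoundedUnder (· ≥ ·) l u) : limsup (u ∘ m) l ≤ limsup u l :=
  limsup_le_limsup_of_le hm
    (IsBoundedUnder.isCoboundedUnder_le (IsBounded.mono (map_mono hm) hge)) hle

section ClarkeDerivative

variable {φ : X → ℝ} {x : X} {K : ℝ≥0} {s : Set X}

def clarkeQuotient (φ : X → ℝ) (v : X) (p : X × ℝ) : ℝ :=
  (φ (p.1 + p.2 • v) - φ p.1) / p.2

theorem clarkeDeriv_eq_limsup (φ : X → ℝ) (x v : X) :
    clarkeDeriv φ x v = limsup (clarkeQuotient φ v) (𝓝 x ×ˢ 𝓝[>] 0) :=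
  rfl

theorem tendsto_add_smul_nhds_prod_nhdsGT (x v : X) :
    Tendsto (fun p : X × ℝ => p.1 + p.2 • v) (𝓝 x ×ˢ 𝓝[>] 0) (𝓝 x) := by
  have hsnd : Tendsto (fun p : X × ℝ => p.2) (𝓝 x ×ˢ 𝓝[>] 0) (𝓝 0) :=
    tendsto_snd.mono_right nhdsWithin_le_nhds
  simpa using tendsto_fst.add (hsnd.smul_const v)

theorem eventually_abs_clarkeQuotient_le (hs : s ∈ 𝓝 x) (hφ : LipschitzOnWith K φ s) (v : X) :
    ∀ᶠ p in 𝓝 x ×ˢ 𝓝[>] 0, |clarkeQuotient φ v p| ≤ K * ‖v‖ := by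
  filter_upwards [tendsto_fst hs, tendsto_add_smul_nhds_prod_nhdsGT x v hs,
    (tendsto_snd : Tendsto Prod.snd (𝓝 x ×ˢ 𝓝[>] (0 : ℝ)) _) self_mem_nhdsWithin]
    with p hp hpv (ht : 0 < p.2)
  rw [clarkeQuotient, abs_div, abs_of_pos ht, div_le_iff₀ ht]
  calc |φ (p.1 + p.2 • v) - φ p.1| ≤ K * ‖p.1 + p.2 • v - p.1‖ := by
        simpa only [Real.dist_eq, dist_eq_norm, Real.norm_eq_abs] using
          hφ.dist_le_mul _ hpv _ hp
    _ = K * ‖v‖ * p.2 := by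
        rw [add_sub_cancel_left, norm_smul, Real.norm_of_nonneg ht.le]; ring

theorem isBoundedUnder_clarkeQuotient (hs : s ∈ 𝓝 x) (hφ : LipschitzOnWith K φ s) (v : X) :
    IsBoundedUnder (· ≤ ·) (𝓝 x ×ˢ 𝓝[>] 0) (clarkeQuotient φ v) ∧
      IsBoundedUnder (· ≥ ·) (𝓝 x ×ˢ 𝓝[>] 0) (clarkeQuotient φ v) :=
  isBoundedUnder_le_abs.1 (isBoundedUnder_of_eventually_le
    (eventually_abs_clarkeQuotient_le hs hφ v))

theorem clarkeDeriv_le (hs : s ∈ 𝓝 x) (hφ : LipschitzOnWith K φ s) (v : X) :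
    clarkeDeriv φ x v ≤ K * ‖v‖ :=
  limsup_le_of_le (isBoundedUnder_clarkeQuotient hs hφ v).2.isCoboundedUnder_le
    ((eventually_abs_clarkeQuotient_le hs hφ v).mono fun _ hp => (abs_le.1 hp).2)

theorem clarkeDeriv_zero (φ : X → ℝ) (x : X) : clarkeDeriv φ x 0 = 0 := by
  simp [clarkeDeriv]

theorem clarkeDeriv_add_le (hs : s ∈ 𝓝 x) (hφ : LipschitzOnWith K φ s) (v w : X) :
    clarkeDeriv φ x (v + w) ≤ clarkeDeriv φ x v + clarkeDeriv φ x w := by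
  set shift : X × ℝ → X × ℝ := fun p => (p.1 + p.2 • v, p.2)
  have hshift : Tendsto shift (𝓝 x ×ˢ 𝓝[>] 0) (𝓝 x ×ˢ 𝓝[>] 0) :=
    (tendsto_add_smul_nhds_prod_nhdsGT x v).prodMk tendsto_snd
  have hsplit : clarkeQuotient φ (v + w) = clarkeQuotient φ w ∘ shift + clarkeQuotient φ v := by
    funext p
    simp only [clarkeQuotient, shift, Function.comp_apply, Pi.add_apply, smul_add, ← add_div,
      add_assoc, sub_add_sub_cancel]
  obtain ⟨hle_v, hge_v⟩ := isBoundedUnder_clarkeQuotient hs hφ v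
  obtain ⟨hle_w, hge_w⟩ := isBoundedUnder_clarkeQuotient hs hφ w
  obtain ⟨hle_sw, hge_sw⟩ := isBoundedUnder_le_abs.1 (isBoundedUnder_of_eventually_le
    (hshift.eventually (eventually_abs_clarkeQuotient_le hs hφ w)))
  calc clarkeDeriv φ x (v + w)
      = limsup (clarkeQuotient φ w ∘ shift + clarkeQuotient φ v) (𝓝 x ×ˢ 𝓝[>] 0) := by
        rw [clarkeDeriv_eq_limsup, hsplit]
    _ ≤ limsup (clarkeQuotient φ w ∘ shift) (𝓝 x ×ˢ 𝓝[>] 0) + clarkeDeriv φ x v :=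
        limsup_add_le hge_sw hle_sw hge_v.isCoboundedUnder_le hle_v
    _ ≤ clarkeDeriv φ x w + clarkeDeriv φ x v := by
        gcongr
        exact limsup_comp_le_of_tendsto hshift hle_w hge_w
    _ = clarkeDeriv φ x v + clarkeDeriv φ x w := add_comm _ _

theorem clarkeDeriv_smul_le (hs : s ∈ 𝓝 x) (hφ : LipschitzOnWith K φ s) {c : ℝ} (hc : 0 < c)
    (v : X) : clarkeDeriv φ x (c • v) ≤ c * clarkeDeriv φ x v := by
  set rescale : X × ℝ → X × ℝ := fun p => (p.1, c * p.2)
  have hrescale : Tendsto rescale (𝓝 x ×ˢ 𝓝[>] 0) (𝓝 x ×ˢ 𝓝[>] 0) := by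
    refine tendsto_fst.prodMk (Tendsto.comp ?_ tendsto_snd)
    refine tendsto_nhdsWithin_of_tendsto_nhds_of_eventually_within _ ?_
      (eventually_nhdsWithin_of_forall fun t (ht : 0 < t) => mul_pos hc ht)
    simpa using (tendsto_nhdsWithin_of_tendsto_nhds (tendsto_id (x := 𝓝 (0 : ℝ)))).const_mul c
  have hsplit : clarkeQuotient φ (c • v) = (c * ·) ∘ (clarkeQuotient φ v ∘ rescale) := by
    funext p
    rcases eq_or_ne p.2 0 with ht | ht
    · simp [clarkeQuotient, rescale, ht]
    · simp only [clarkeQuotient, rescale, Function.comp_apply, smul_smul, mul_comm p.2 c]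
      field_simp
  obtain ⟨hle, hge⟩ := isBoundedUnder_clarkeQuotient hs hφ v
  obtain ⟨hle_r, hge_r⟩ := isBoundedUnder_le_abs.1 (isBoundedUnder_of_eventually_le
    (hrescale.eventually (eventually_abs_clarkeQuotient_le hs hφ v)))
  rw [clarkeDeriv_eq_limsup, hsplit, ← Monotone.map_limsup_of_continuousAt
    (monotone_mul_left_of_nonneg hc.le) (clarkeQuotient φ v ∘ rescale)
    (continuous_const_mul c).continuousAt hle_r hge_r.isCoboundedUnder_le]
  exact mul_le_mul_of_nonneg_left (limsup_comp_le_of_tendsto hrescale hle hge) hc.le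

theorem clarkeDeriv_smul (hs : s ∈ 𝓝 x) (hφ : LipschitzOnWith K φ s) {c : ℝ} (hc : 0 < c)
    (v : X) : clarkeDeriv φ x (c • v) = c * clarkeDeriv φ x v := by
  refine le_antisymm (clarkeDeriv_smul_le hs hφ hc v) ?_
  have h := clarkeDeriv_smul_le hs hφ (inv_pos.2 hc) (c • v)
  rw [inv_smul_smul₀ hc.ne'] at h
  calc c * clarkeDeriv φ x v ≤ c * (c⁻¹ * clarkeDeriv φ x (c • v)) := by gcongr
    _ = clarkeDeriv φ x (c • v) := by field_simp

theorem clarkeSubdiff_nonempty (hs : s ∈ 𝓝 x) (hφ : LipschitzOnWith K φ s) :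
    (clarkeSubdiff φ x).Nonempty := by
  obtain ⟨g, -, hg⟩ := exists_extension_of_le_sublinear ⊥ (clarkeDeriv φ x)
    (fun _ hc v => clarkeDeriv_smul hs hφ hc v) (clarkeDeriv_add_le hs hφ)
    (fun ⟨v, hv⟩ => by
      obtain rfl := (Submodule.mem_bot ℝ).1 hv
      exact (LinearPMap.map_zero ⊥).trans_le (clarkeDeriv_zero φ x).ge)
  have hgK (v : X) : g v ≤ K * ‖v‖ := (hg v).trans (clarkeDeriv_le hs hφ v)
  refine ⟨g.mkContinuous K fun v => abs_le.2 ⟨?_, hgK v⟩, hg⟩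
  simpa [neg_le] using hgK (-v)

end ClarkeDerivative

theorem clarkeDeriv_norm_le (z v : Y) : clarkeDeriv (fun w : Y => ‖w‖) z v ≤ ‖v‖ := by
  simpa using clarkeDeriv_le univ_mem (lipschitzWith_one_norm.lipschitzOnWith (s := univ)) v

theorem clarkeDeriv_norm_neg_self (z : Y) : clarkeDeriv (fun w : Y => ‖w‖) z (-z) ≤ -‖z‖ := by
  have hbound : ∀ᶠ p in 𝓝 z ×ˢ 𝓝[>] 0,
      clarkeQuotient (fun w : Y => ‖w‖) (-z) p ≤ -‖z‖ + 2 * ‖p.1 - z‖ := by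
    filter_upwards [(tendsto_snd : Tendsto Prod.snd (𝓝 z ×ˢ 𝓝[>] (0 : ℝ)) _)
      (Ioo_mem_nhdsGT one_pos)] with p ⟨ht0, ht1⟩
    have hconv : ‖p.1 + p.2 • -z‖ ≤ (1 - p.2) * ‖p.1‖ + p.2 * ‖p.1 - z‖ := by
      calc ‖p.1 + p.2 • -z‖ = ‖(1 - p.2) • p.1 + p.2 • (p.1 - z)‖ := by
            congr 1; module
        _ ≤ _ := by
          refine (norm_add_le _ _).trans_eq ?_
          rw [norm_smul, norm_smul, Real.norm_of_nonneg (by linarith),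
            Real.norm_of_nonneg ht0.le]
    have htri : ‖z‖ ≤ ‖p.1‖ + ‖p.1 - z‖ := by
      simpa using norm_sub_le p.1 (p.1 - z)
    rw [clarkeQuotient, div_le_iff₀ ht0]
    nlinarith [norm_nonneg (p.1 - z)]
  have hlim : Tendsto (fun p : Y × ℝ => -‖z‖ + 2 * ‖p.1 - z‖) (𝓝 z ×ˢ 𝓝[>] 0) (𝓝 (-‖z‖)) := by
    have hfst : Tendsto Prod.fst (𝓝 z ×ˢ 𝓝[>] (0 : ℝ)) (𝓝 z) := tendsto_fst
    simpa using ((hfst.sub_const z).norm.const_mul 2).const_add (-‖z‖)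
  calc clarkeDeriv (fun w : Y => ‖w‖) z (-z)
      ≤ limsup (fun p : Y × ℝ => -‖z‖ + 2 * ‖p.1 - z‖) (𝓝 z ×ˢ 𝓝[>] 0) :=
        limsup_le_limsup hbound (isBoundedUnder_clarkeQuotient univ_mem
          (lipschitzWith_one_norm.lipschitzOnWith (s := univ)) (-z)).2.isCoboundedUnder_le
          hlim.isBoundedUnder_le
    _ = -‖z‖ := hlim.limsup_eq

theorem norm_eq_one_of_mem_clarkeSubdiff_norm {z : Y} (hz : z ≠ 0) {y' : StrongDual ℝ Y}
    (hy' : y' ∈ clarkeSubdiff (fun w : Y => ‖w‖) z) : ‖y'‖ = 1 := by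
  have hle (v : Y) : y' v ≤ ‖v‖ := (hy' v).trans (clarkeDeriv_norm_le z v)
  refine le_antisymm (y'.opNorm_le_bound zero_le_one fun v => ?_) ?_
  · rw [Real.norm_eq_abs, one_mul, abs_le]
    exact ⟨by simpa [neg_le] using hle (-v), hle v⟩
  · have hself : ‖z‖ ≤ y' z := by
      simpa [le_neg] using (hy' (-z)).trans (clarkeDeriv_norm_neg_self z)
    refine le_of_mul_le_mul_right ?_ (norm_pos_iff.2 hz)
    rw [one_mul]
    exact hself.trans ((le_abs_self _).trans (y'.le_opNorm z))

theorem banachC_nonneg (T : X →L[ℝ] Y) : 0 ≤ banachC T :=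
  Real.sInf_nonneg (by rintro _ ⟨y', -, rfl⟩; exact norm_nonneg _)

theorem banachC_le_norm_comp (T : X →L[ℝ] Y) {y' : StrongDual ℝ Y} (hy' : ‖y'‖ = 1) :
    banachC T ≤ ‖y'.comp T‖ :=
  csInf_le ⟨0, by rintro _ ⟨_, -, rfl⟩; exact norm_nonneg _⟩ ⟨y', hy', rfl⟩

theorem banachC_le_add_norm_sub (T S : X →L[ℝ] Y) : banachC T ≤ banachC S + ‖T - S‖ := by
  rcases eq_empty_or_nonempty {y' : StrongDual ℝ Y | ‖y'‖ = 1} with hempty | hne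
  · simp [banachC, hempty]
  rw [← sub_le_iff_le_add]
  refine le_csInf (hne.image _) ?_
  rintro _ ⟨y', hy', rfl⟩
  have hcomp : ‖y'.comp T - y'.comp S‖ ≤ ‖T - S‖ := by
    simpa [← ContinuousLinearMap.comp_sub, show ‖y'‖ = 1 from hy'] using
      y'.opNorm_comp_le (T - S)
  linarith [banachC_le_norm_comp T hy', norm_sub_norm_le (y'.comp T) (y'.comp S)]

theorem lipschitzWith_banachC : LipschitzWith 1 (banachC : (X →L[ℝ] Y) → ℝ) :=
  LipschitzWith.of_le_add fun T S => by
    simpa [dist_eq_norm] using banachC_le_add_norm_sub T S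

theorem regJ_le_banachC {Jf : X → Set (X →L[ℝ] Y)} {x : X} {T : X →L[ℝ] Y}
    (hT : T ∈ closure (convexHull ℝ (Jf x))) : regJ Jf x ≤ banachC T := by
  refine Real.sSup_le ?_ (banachC_nonneg T)
  rintro _ ⟨r, hr, rfl⟩
  have hinf : ∀ S ∈ convexHull ℝ (Jf x),
      sInf (banachC '' convexHull ℝ (⋃ z ∈ ball x r, Jf z)) ≤ banachC S := fun S hS =>
    csInf_le ⟨0, by rintro _ ⟨_, -, rfl⟩; exact banachC_nonneg _⟩
      ⟨S, convexHull_mono (subset_biUnion_of_mem (mem_ball_self hr)) hS, rfl⟩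
  exact closure_minimal hinf (isClosed_le continuous_const lipschitzWith_banachC.continuous) hT

theorem regJ_le_norm_of_mem_DeltaF {f : X → Y} {Jf : X → Set (X →L[ℝ] Y)} {y : Y} {x : X}
    (hne : f x ≠ y) {w : StrongDual ℝ X} (hw : w ∈ DeltaF f Jf y x) : regJ Jf x ≤ ‖w‖ := by
  obtain ⟨y', hy', T, hT, rfl⟩ := hw
  exact (regJ_le_banachC hT).trans
    (banachC_le_norm_comp T (norm_eq_one_of_mem_clarkeSubdiff_norm (sub_ne_zero.2 hne) hy'))

theorem regJ_le_lambdaF {f : X → Y} (hf : LocallyLipschitz f) {Jf : X → Set (X →L[ℝ] Y)}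
    {y : Y} {x : X} (hne : f x ≠ y)
    (hsub : clarkeSubdiff (fun z : X => ‖f z - y‖) x ⊆ DeltaF f Jf y x) :
    regJ Jf x ≤ lambdaF (fun z : X => ‖f z - y‖) x := by
  have hF : LocallyLipschitz fun z : X => ‖f z - y‖ := by
    simpa only [Function.comp_def, dist_eq_norm] using
      (LipschitzWith.dist_left y).locallyLipschitz.comp hf
  obtain ⟨K, s, hs, hK⟩ := hF x
  refine le_csInf ((clarkeSubdiff_nonempty hs hK).image _) ?_
  rintro _ ⟨w, hw, rfl⟩
  exact regJ_le_norm_of_mem_DeltaF hne (hsub hw)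

theorem lambda_ge_reg_general {X Y : Type*}
    [NormedAddCommGroup X] [NormedSpace ℝ X]
    [NormedAddCommGroup Y] [NormedSpace ℝ Y]
    (f : X → Y) (hf : LocallyLipschitz f)
    (Jf : X → Set (X →L[ℝ] Y))
    (hscr : StrongChainRuleCond f Jf Set.univ)
    (y : Y) (x : X) (hreg : RegularAt Jf x) :
    (f x ≠ y → regJ Jf x ≤ lambdaF (fun z : X => ‖f z - y‖) x ∧ 0 < regJ Jf x) ∧
    (lambdaF (fun z : X => ‖f z - y‖) x = 0 → f x = y) := by
  obtain ⟨-, -, hpos⟩ := hreg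
  have hle (hne : f x ≠ y) : regJ Jf x ≤ lambdaF (fun z : X => ‖f z - y‖) x :=
    regJ_le_lambdaF hf hne (hscr.2.2 x (mem_univ x) y (Ne.symm hne))
  refine ⟨fun hne => ⟨hle hne, hpos⟩, fun hzero => ?_⟩
  by_contra hne
  exact (hle hne).not_gt (hzero ▸ hpos)

/-- If `f : X → Y` is locally Lipschitz with a pseudo-Jacobian mapping `Jf` satisfying the
strong chain rule condition on `X`, `Jf` is regular at `x` and `f(x) ≠ y`, then
`λ_{F_y}(x) ≥ reg Jf(x) > 0`; consequently if `λ_{F_y}(x) = 0` then `f(x) = y`. -/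
theorem lambda_ge_reg {X Y : Type*}
    [NormedAddCommGroup X] [NormedSpace ℝ X] [CompleteSpace X]
    [NormedAddCommGroup Y] [NormedSpace ℝ Y] [CompleteSpace Y]
    (f : X → Y) (hf : LocallyLipschitz f)
    (Jf : X → Set (X →L[ℝ] Y)) (hJf : ∀ x : X, IsPseudoJacobianAt f x (Jf x))
    (hscr : StrongChainRuleCond f Jf Set.univ)
    (y : Y) (x : X) (hreg : RegularAt Jf x) :
    (f x ≠ y → regJ Jf x ≤ lambdaF (fun z : X => ‖f z - y‖) x ∧ 0 < regJ Jf x) ∧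
    (lambdaF (fun z : X => ‖f z - y‖) x = 0 → f x = y) :=
  lambda_ge_reg_general f hf Jf hscr y x hreg
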